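/- Let p be an odd prime, m ≥ 1, and A_1, A_2 m×m matrices over F_p with Q = (A_1 - A_2) + (A_1 - A_2)ᵀ of rank r over F_p. Then for all c_1, c_2 ∈ F_p^m, |∑_{x ∈ F_p^m} ω^{x A_1 xᵀ - x A_2 xᵀ + (c_1-c_2)·x}| ≤ p^{(2m-r)/2}, where ω = e^(2πi/p). -/

import Mathlib

open scoped BigOperators Matrix

noncomputable def omegaP (p : ℕ) : ℂ := Complex.exp (2 * Real.pi * Complex.I / p)

/-!
Write `f x = x ⬝ᵥ B *ᵥ x + c ⬝ᵥ x` with `B = A₁ - A₂`, and let `ψ` be the standard additive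
character of `ZMod p`, so that the sum is `S = ∑ₓ ψ (f x)`. Expanding `S * conj S` and substituting
`x = y + z` (Weyl differencing) leaves `f (y + z) - f y - f z = y ⬝ᵥ Q *ᵥ z` with `Q = B + Bᵀ`, linear
in `y`. Hence `|S|² = ∑_z ψ (f z) ∑_y ψ (y ⬝ᵥ Q *ᵥ z)`; by orthogonality the inner sum is `p ^ m`
when `Q *ᵥ z = 0` and vanishes otherwise, so `|S|² ≤ p ^ m · #ker Q = p ^ m · p ^ (m - r)`.
-/

open Finset Matrix ComplexConjugate

lemma omegaP_pow_val (p : ℕ) [NeZero p] (a : ZMod p) : omegaP p ^ a.val = ZMod.stdAddChar a := by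
  rw [ZMod.stdAddChar_apply, ZMod.toCircle_apply, omegaP, ← Complex.exp_nat_mul]
  ring_nf

lemma AddChar.map_sum_eq_prod {ι A M : Type*} [AddCommMonoid A] [CommMonoid M]
    (ψ : AddChar A M) (s : Finset ι) (f : ι → A) : ψ (∑ i ∈ s, f i) = ∏ i ∈ s, ψ (f i) := by
  induction s using Finset.cons_induction <;> simp [*, AddChar.map_add_eq_mul]

lemma sum_addChar_dotProduct {R R' n : Type*} [CommRing R] [Fintype R] [DecidableEq R]
    [CommRing R'] [IsDomain R'] [Fintype n] [DecidableEq n] {ψ : AddChar R R'}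
    (hψ : ψ.IsPrimitive) (v : n → R) :
    ∑ y : n → R, ψ (y ⬝ᵥ v) = if v = 0 then (Fintype.card R : R') ^ Fintype.card n else 0 := by
  simp_rw [dotProduct, AddChar.map_sum_eq_prod]
  rw [← Fintype.prod_sum (fun i t => ψ (t * v i))]
  simp only [AddChar.sum_mulShift _ hψ, apply_ite (Nat.cast : ℕ → R'), Nat.cast_zero,
    Fintype.prod_ite_zero, prod_const, card_univ, funext_iff, Pi.zero_apply]

lemma natCard_mulVec_eq_zero {F m n : Type*} [Field F] [Fintype F] [Fintype n]
    (Q : Matrix m n F) :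
    Nat.card {z : n → F // Q *ᵥ z = 0} = Fintype.card F ^ (Fintype.card n - Q.rank) := by
  have hrank := LinearMap.finrank_range_add_finrank_ker Q.mulVecLin
  rw [Module.finrank_fintype_fun_eq_card] at hrank
  change Nat.card (LinearMap.ker Q.mulVecLin) = _
  rw [Module.natCard_eq_pow_finrank (K := F), Nat.card_eq_fintype_card, Matrix.rank]
  congr 1
  omega

section WeylDifferencing

variable {V R : Type*} [AddCommGroup V] [Fintype V] [AddCommGroup R] [Finite R]

lemma mul_conj_sum_addChar (ψ : AddChar R ℂ) (f : V → R) :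
    (∑ x, ψ (f x)) * conj (∑ x, ψ (f x)) = ∑ z, ψ (f z) * ∑ y, ψ (f (y + z) - f y - f z) := by
  simp_rw [map_sum, ← AddChar.map_neg_eq_conj, sum_mul_sum, mul_sum, ← AddChar.map_add_eq_mul]
  rw [sum_comm]
  conv_rhs => rw [sum_comm]
  refine sum_congr rfl fun y _ => ?_
  rw [← Equiv.sum_comp (Equiv.addLeft y)]
  refine sum_congr rfl fun z _ => congrArg ψ ?_
  rw [Equiv.coe_addLeft]
  abel

lemma norm_sum_addChar_sq_le (ψ : AddChar R ℂ) (f : V → R) :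
    ‖∑ x, ψ (f x)‖ ^ 2 ≤ ∑ z, ‖∑ y, ψ (f (y + z) - f y - f z)‖ := by
  calc ‖∑ x, ψ (f x)‖ ^ 2 = ‖(∑ x, ψ (f x)) * conj (∑ x, ψ (f x))‖ := by
        rw [norm_mul, Complex.norm_conj, sq]
    _ ≤ ∑ z, ‖ψ (f z) * ∑ y, ψ (f (y + z) - f y - f z)‖ := by
        rw [mul_conj_sum_addChar]
        exact norm_sum_le _ _
    _ = ∑ z, ‖∑ y, ψ (f (y + z) - f y - f z)‖ := by
        simp_rw [norm_mul, AddChar.norm_apply, one_mul]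

end WeylDifferencing

lemma dotProduct_mulVec_polar {R n : Type*} [CommRing R] [Fintype n] (B : Matrix n n R)
    (c y z : n → R) :
    (y + z) ⬝ᵥ B *ᵥ (y + z) + c ⬝ᵥ (y + z) - (y ⬝ᵥ B *ᵥ y + c ⬝ᵥ y) - (z ⬝ᵥ B *ᵥ z + c ⬝ᵥ z)
      = y ⬝ᵥ (B + Bᵀ) *ᵥ z := by
  simp only [mulVec_add, add_mulVec, dotProduct_add, add_dotProduct, dotProduct_mulVec y Bᵀ,
    vecMul_transpose, dotProduct_comm _ z]
  ring

theorem norm_sum_addChar_quadratic_sq_le {F n : Type*} [Field F] [Fintype F] [Fintype n]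
    [DecidableEq n] {ψ : AddChar F ℂ} (hψ : ψ.IsPrimitive) (B : Matrix n n F) (c : n → F) :
    ‖∑ x, ψ (x ⬝ᵥ B *ᵥ x + c ⬝ᵥ x)‖ ^ 2 ≤
      (Fintype.card F : ℝ) ^ Fintype.card n * Fintype.card F ^ (Fintype.card n - (B + Bᵀ).rank) := by
  classical
  refine (norm_sum_addChar_sq_le ψ _).trans_eq ?_
  simp_rw [dotProduct_mulVec_polar, sum_addChar_dotProduct hψ, apply_ite norm, norm_zero,
    norm_pow, Complex.norm_natCast]
  rw [sum_ite, sum_const_zero, add_zero, sum_const, ← Fintype.card_subtype,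
    ← Nat.card_eq_fintype_card, natCard_mulVec_eq_zero, nsmul_eq_mul]
  push_cast
  ring

theorem stmt10_general (p m r : ℕ) [Fact p.Prime]
    (A₁ A₂ : Matrix (Fin m) (Fin m) (ZMod p))
    (hr : ((A₁ - A₂) + (A₁ - A₂)ᵀ).rank = r)
    (c₁ c₂ : Fin m → ZMod p) :
    ‖(∑ x : Fin m → ZMod p,
        omegaP p ^ ((x ⬝ᵥ A₁.mulVec x) - (x ⬝ᵥ A₂.mulVec x) + (c₁ - c₂) ⬝ᵥ x).val)‖
      ≤ Real.sqrt ((p : ℝ) ^ (2 * m - r)) := by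
  have hrm : r ≤ m := hr ▸ rank_le_width _
  have hsum : ∀ x : Fin m → ZMod p, (x ⬝ᵥ A₁ *ᵥ x) - (x ⬝ᵥ A₂ *ᵥ x) + (c₁ - c₂) ⬝ᵥ x
      = x ⬝ᵥ (A₁ - A₂) *ᵥ x + (c₁ - c₂) ⬝ᵥ x := fun x => by rw [sub_mulVec, dotProduct_sub]
  simp_rw [omegaP_pow_val, hsum]
  apply Real.le_sqrt_of_sq_le
  convert norm_sum_addChar_quadratic_sq_le (ZMod.isPrimitive_stdAddChar p) (A₁ - A₂) (c₁ - c₂)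
    using 1
  rw [ZMod.card, Fintype.card_fin, hr, ← pow_add]
  congr 1
  omega

theorem stmt10 (p m r : ℕ) [Fact p.Prime] (hodd : Odd p) (hm : 0 < m)
    (A₁ A₂ : Matrix (Fin m) (Fin m) (ZMod p))
    (hr : ((A₁ - A₂) + (A₁ - A₂)ᵀ).rank = r)
    (c₁ c₂ : Fin m → ZMod p) :
    ‖(∑ x : Fin m → ZMod p,
        omegaP p ^ ((x ⬝ᵥ A₁.mulVec x) - (x ⬝ᵥ A₂.mulVec x) + (c₁ - c₂) ⬝ᵥ x).val)‖
      ≤ Real.sqrt ((p : ℝ) ^ (2 * m - r)) :=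
  stmt10_general p m r A₁ A₂ hr c₁ c₂
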